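/- arXiv:2008.09235 — 2 statements merged into one kernel-verified Lean document; each statement's English description precedes it below -/
import Mathlib

section
/- Let p be a positive integer, T₁ > 0, a₁ > 0 and ε ∈ ℝ. Let f : (0,∞) × ℝ → ℂ be measurable, square-integrable on compact subsets, and satisfy f(a, t + p) = f(a, t) for all a > 0 and t ∈ ℝ. Then, as an inequality of values in [0,∞], ∫₀^{a₁} a^{2+ε} ⌊T₁/(p a²)⌋ (∫₀^{p} |f(a,t)|² dt) da/a ≤ ∫₀^{a₁} ∫₀^{T₁} a^{ε} |f(a, a^{−2} T)|² dT da/a ≤ ∫₀^{a₁} a^{2+ε} (⌊T₁/(p a²)⌋ + 1) (∫₀^{p} |f(a,t)|² dt) da/a, where ⌊·⌋ is the floor function. -/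
open MeasureTheory Real Set
open scoped ENNReal NNReal

/-!
For fixed `a > 0`, the substitution `t = a⁻² T` turns the inner integral into
`a^{2+ε} ∫₀^{T₁/a²} |f(a,t)|² dt`. By `p`-periodicity the integral of `|f(a,·)|²` over `(0, n p]`
is `n` times the one over `(0, p]`, and with `n = ⌊T₁/(p a²)⌋` the interval `(0, T₁/a²]` lies
between `(0, n p]` and `(0, (n+1) p]`. Integrating these fibrewise bounds against `da/a` gives
both inequalities.
-/

theorem lintegral_Ioc_comp_mul_left (g : ℝ → ℝ≥0∞) {c : ℝ} (hc : 0 < c) (a b : ℝ) :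
    ∫⁻ x in Ioc a b, g (c * x) = ENNReal.ofReal c⁻¹ * ∫⁻ y in Ioc (c * a) (c * b), g y := by
  have hmp : MeasurePreserving (c * ·) volume (ENNReal.ofReal |c⁻¹| • volume) :=
    ⟨measurable_const_mul c, Real.map_volume_mul_left hc.ne'⟩
  rw [hmp.setLIntegral_comp_emb (Homeomorph.mulLeft₀ c hc.ne').measurableEmbedding,
    image_mul_left_Ioc hc, Measure.restrict_smul, lintegral_smul_measure, smul_eq_mul,
    abs_of_pos (inv_pos.2 hc)]

theorem lintegral_Ioc_ofReal_rpow_mul_comp_zpow (g : ℝ → ℝ≥0∞) {a : ℝ} (ha : 0 < a) (ε T₁ : ℝ) :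
    ∫⁻ T in Ioc 0 T₁, ENNReal.ofReal (a ^ ε) * g (a ^ (-2 : ℤ) * T)
      = ENNReal.ofReal (a ^ ((2 : ℝ) + ε)) * ∫⁻ t in Ioc 0 (T₁ / a ^ 2), g t := by
  have hzpow : a ^ (-2 : ℤ) = (a ^ 2)⁻¹ := by rw [zpow_neg]; norm_cast
  rw [lintegral_const_mul' _ _ ENNReal.ofReal_ne_top, hzpow,
    lintegral_Ioc_comp_mul_left g (by positivity), inv_inv, mul_zero, inv_mul_eq_div,
    rpow_add ha, rpow_two, ENNReal.ofReal_mul (by positivity)]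
  ring

namespace Function.Periodic

variable {g : ℝ → ℝ≥0∞} {P : ℝ}

theorem lintegral_Ioc_add_period (hg : Periodic g P) (a b : ℝ) :
    ∫⁻ t in Ioc (a + P) (b + P), g t = ∫⁻ t in Ioc a b, g t := by
  rw [← image_add_const_Ioc, ← (measurePreserving_add_right volume P).setLIntegral_comp_emb
    (MeasurableEquiv.addRight P).measurableEmbedding]
  exact lintegral_congr fun t => hg t

theorem lintegral_Ioc_nat_mul (hg : Periodic g P) (hP : 0 ≤ P) (n : ℕ) :
    ∫⁻ t in Ioc 0 (n * P), g t = n * ∫⁻ t in Ioc 0 P, g t := by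
  induction n with
  | zero => simp
  | succ n ih =>
    have hsplit : Ioc 0 (n * P) ∪ Ioc (0 + n * P) (P + n * P) = Ioc 0 ((n + 1 : ℕ) * P) := by
      rw [zero_add, Ioc_union_Ioc_eq_Ioc (by positivity) (by linarith)]
      push_cast; ring_nf
    rw [← hsplit, lintegral_union measurableSet_Ioc (Ioc_disjoint_Ioc_of_le (zero_add _).ge), ih,
      (hg.nat_mul n).lintegral_Ioc_add_period]
    push_cast
    ring

theorem floor_mul_lintegral_Ioc_le (hg : Periodic g P) (hP : 0 < P) {L : ℝ} (hL : 0 ≤ L) :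
    ⌊L / P⌋₊ * ∫⁻ t in Ioc 0 P, g t ≤ ∫⁻ t in Ioc 0 L, g t := by
  rw [← hg.lintegral_Ioc_nat_mul hP.le]
  exact lintegral_mono_set
    (Ioc_subset_Ioc_right ((le_div_iff₀ hP).1 (Nat.floor_le (by positivity))))

theorem lintegral_Ioc_le_floor_add_one_mul (hg : Periodic g P) (hP : 0 < P) (L : ℝ) :
    ∫⁻ t in Ioc 0 L, g t ≤ (⌊L / P⌋₊ + 1) * ∫⁻ t in Ioc 0 P, g t := by
  have hcover := hg.lintegral_Ioc_nat_mul hP.le (⌊L / P⌋₊ + 1)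
  push_cast at hcover
  rw [← hcover]
  exact lintegral_mono_set
    (Ioc_subset_Ioc_right ((div_le_iff₀ hP).1 (Nat.lt_floor_add_one _).le))

theorem ofReal_mul_floor_mul_lintegral_le (hg : Periodic g P) (hP : 0 < P) {a : ℝ} (ha : 0 < a)
    (ε : ℝ) {T₁ : ℝ} (hT₁ : 0 ≤ T₁) :
    ENNReal.ofReal (a ^ ((2 : ℝ) + ε) * ((⌊T₁ / (P * a ^ 2)⌋ : ℤ) : ℝ)) * ∫⁻ t in Ioc 0 P, g t
      ≤ ∫⁻ T in Ioc 0 T₁, ENNReal.ofReal (a ^ ε) * g (a ^ (-2 : ℤ) * T) := by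
  have hL : 0 ≤ T₁ / a ^ 2 := by positivity
  rw [lintegral_Ioc_ofReal_rpow_mul_comp_zpow g ha, mul_comm P, ← div_div,
    ← natCast_floor_eq_intCast_floor (div_nonneg hL hP.le), ENNReal.ofReal_mul (by positivity),
    ENNReal.ofReal_natCast, mul_assoc]
  gcongr
  exact hg.floor_mul_lintegral_Ioc_le hP hL

theorem lintegral_le_ofReal_mul_floor_add_one_mul (hg : Periodic g P) (hP : 0 < P) {a : ℝ}
    (ha : 0 < a) (ε : ℝ) {T₁ : ℝ} (hT₁ : 0 ≤ T₁) :
    ∫⁻ T in Ioc 0 T₁, ENNReal.ofReal (a ^ ε) * g (a ^ (-2 : ℤ) * T)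
      ≤ ENNReal.ofReal (a ^ ((2 : ℝ) + ε) * (((⌊T₁ / (P * a ^ 2)⌋ : ℤ) : ℝ) + 1))
          * ∫⁻ t in Ioc 0 P, g t := by
  have hL : 0 ≤ T₁ / a ^ 2 := by positivity
  rw [lintegral_Ioc_ofReal_rpow_mul_comp_zpow g ha, mul_comm P, ← div_div,
    ← natCast_floor_eq_intCast_floor (div_nonneg hL hP.le), ENNReal.ofReal_mul (by positivity),
    ENNReal.ofReal_add (by positivity) zero_le_one, ENNReal.ofReal_natCast, ENNReal.ofReal_one,
    mul_assoc]
  gcongr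
  exact hg.lintegral_Ioc_le_floor_add_one_mul hP _

end Function.Periodic

theorem stmt0_general (p : ℕ) (hp : 0 < p) (T₁ : ℝ) (hT₁ : 0 < T₁) (a₁ : ℝ) (ε : ℝ)
    (f : ℝ × ℝ → ℂ)
    (hper : ∀ a : ℝ, 0 < a → ∀ t : ℝ, f (a, t + (p : ℝ)) = f (a, t)) :
    (∫⁻ a in Ioc (0:ℝ) a₁,
        ENNReal.ofReal (a ^ ((2:ℝ) + ε) * ((⌊T₁ / ((p : ℝ) * a ^ 2)⌋ : ℤ) : ℝ)) *
          (∫⁻ t in Ioc (0:ℝ) (p : ℝ), (‖f (a, t)‖₊ : ℝ≥0∞) ^ 2) * ENNReal.ofReal a⁻¹)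
      ≤ (∫⁻ a in Ioc (0:ℝ) a₁,
          (∫⁻ T in Ioc (0:ℝ) T₁,
            ENNReal.ofReal (a ^ ε) * (‖f (a, a ^ (-2 : ℤ) * T)‖₊ : ℝ≥0∞) ^ 2)
            * ENNReal.ofReal a⁻¹) ∧
    (∫⁻ a in Ioc (0:ℝ) a₁,
        (∫⁻ T in Ioc (0:ℝ) T₁,
          ENNReal.ofReal (a ^ ε) * (‖f (a, a ^ (-2 : ℤ) * T)‖₊ : ℝ≥0∞) ^ 2)
          * ENNReal.ofReal a⁻¹)
      ≤ (∫⁻ a in Ioc (0:ℝ) a₁,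
          ENNReal.ofReal (a ^ ((2:ℝ) + ε) * (((⌊T₁ / ((p : ℝ) * a ^ 2)⌋ : ℤ) : ℝ) + 1)) *
            (∫⁻ t in Ioc (0:ℝ) (p : ℝ), (‖f (a, t)‖₊ : ℝ≥0∞) ^ 2) * ENNReal.ofReal a⁻¹) := by
  have hp' : (0 : ℝ) < p := Nat.cast_pos.2 hp
  have hfiber : ∀ a, 0 < a → Function.Periodic (fun t => (‖f (a, t)‖₊ : ℝ≥0∞) ^ 2) p :=
    fun a ha t => by simp only [hper a ha t]
  constructor
  · refine setLIntegral_mono' measurableSet_Ioc fun a ha => ?_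
    gcongr
    exact (hfiber a ha.1).ofReal_mul_floor_mul_lintegral_le hp' ha.1 ε hT₁.le
  · refine setLIntegral_mono' measurableSet_Ioc fun a ha => ?_
    gcongr
    exact (hfiber a ha.1).lintegral_le_ofReal_mul_floor_add_one_mul hp' ha.1 ε hT₁.le

/-- if `f : (0,∞) × ℝ → ℂ` is measurable, locally square-integrable, and
`p`-periodic in the second variable, then the `L²(P(T₁,a₁)⁻, a^ε (da/a) dT)`-norm of
`f(n_T d_a) = f(d_a n_{a⁻²T})` is squeezed between the integrals
`∫₀^{a₁} a^{2+ε} ⌊T₁/(p a²)⌋ (∫₀^p |f(a,t)|² dt) da/a` and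
`∫₀^{a₁} a^{2+ε} (⌊T₁/(p a²)⌋ + 1) (∫₀^p |f(a,t)|² dt) da/a`, in `[0,∞]`. -/
theorem stmt0 (p : ℕ) (hp : 0 < p) (T₁ : ℝ) (hT₁ : 0 < T₁) (a₁ : ℝ) (ha₁ : 0 < a₁) (ε : ℝ)
    (f : ℝ × ℝ → ℂ) (hf : Measurable f)
    (hloc : ∀ K : Set (ℝ × ℝ), IsCompact K → IntegrableOn (fun q => ‖f q‖ ^ 2) K volume)
    (hper : ∀ a : ℝ, 0 < a → ∀ t : ℝ, f (a, t + (p : ℝ)) = f (a, t)) :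
    (∫⁻ a in Ioc (0:ℝ) a₁,
        ENNReal.ofReal (a ^ ((2:ℝ) + ε) * ((⌊T₁ / ((p : ℝ) * a ^ 2)⌋ : ℤ) : ℝ)) *
          (∫⁻ t in Ioc (0:ℝ) (p : ℝ), (‖f (a, t)‖₊ : ℝ≥0∞) ^ 2) * ENNReal.ofReal a⁻¹)
      ≤ (∫⁻ a in Ioc (0:ℝ) a₁,
          (∫⁻ T in Ioc (0:ℝ) T₁,
            ENNReal.ofReal (a ^ ε) * (‖f (a, a ^ (-2 : ℤ) * T)‖₊ : ℝ≥0∞) ^ 2)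
            * ENNReal.ofReal a⁻¹) ∧
    (∫⁻ a in Ioc (0:ℝ) a₁,
        (∫⁻ T in Ioc (0:ℝ) T₁,
          ENNReal.ofReal (a ^ ε) * (‖f (a, a ^ (-2 : ℤ) * T)‖₊ : ℝ≥0∞) ^ 2)
          * ENNReal.ofReal a⁻¹)
      ≤ (∫⁻ a in Ioc (0:ℝ) a₁,
          ENNReal.ofReal (a ^ ((2:ℝ) + ε) * (((⌊T₁ / ((p : ℝ) * a ^ 2)⌋ : ℤ) : ℝ) + 1)) *
            (∫⁻ t in Ioc (0:ℝ) (p : ℝ), (‖f (a, t)‖₊ : ℝ≥0∞) ^ 2) * ENNReal.ofReal a⁻¹) :=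
  stmt0_general p hp T₁ hT₁ a₁ ε f hper
end

section
/- Let p be a positive integer, T₁ ≠ 0, a₁ > 0 and ε ∈ ℝ. Let f : SL(2,ℝ) → ℂ be measurable, square-integrable on compact sets, with f(x n_p) = f(x) for all x ∈ SL(2,ℝ). Then, as inequalities in [0,∞], ∫₀^{2π} ∫₀^{a₁} a^{2+ε} ⌊|T₁|/(p a²)⌋ (∫₀^{p} |f(k_θ d_a n_t)|² dt) da/a dθ ≤ ‖f‖²_{T₁,a₁⁻,ε} ≤ ∫₀^{2π} ∫₀^{a₁} a^{2+ε} (⌊|T₁|/(p a²)⌋ + 1) (∫₀^{p} |f(k_θ d_a n_t)|² dt) da/a dθ. -/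
open MeasureTheory Real Set
open scoped ENNReal NNReal

noncomputable section

abbrev SL2 := Matrix.SpecialLinearGroup (Fin 2) ℝ

instance : TopologicalSpace SL2 :=
  inferInstanceAs (TopologicalSpace {A : Matrix (Fin 2) (Fin 2) ℝ // A.det = 1})
instance : MeasurableSpace SL2 := borel SL2

/-- The rotation `k_θ = [[cos θ, −sin θ],[sin θ, cos θ]]`. -/
def kRot (θ : ℝ) : SL2 :=
  ⟨!![Real.cos θ, -Real.sin θ; Real.sin θ, Real.cos θ], by
    simp [Matrix.det_fin_two_of]
    nlinarith [Real.sin_sq_add_cos_sq θ]⟩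

/-- The diagonal element `d_a = [[a,0],[0,a⁻¹]]` (junk value `1` when `a = 0`). -/
def dMat (a : ℝ) : SL2 :=
  if h : a ≠ 0 then ⟨!![a, 0; 0, a⁻¹], by simp [Matrix.det_fin_two_of, mul_inv_cancel₀ h]⟩
  else 1

/-- The unipotent element `n_t = [[1,t],[0,1]]`. -/
def nMat (t : ℝ) : SL2 := ⟨!![1, t; 0, 1], by simp [Matrix.det_fin_two_of]⟩

/-- Local square-integrability of `f : SL2 → ℂ`, expressed in the `KNA` coordinates
`(θ, T, a) ↦ k_θ n_T d_a` (which parametrize all of `SL(2,ℝ)`, with `a > 0`). -/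
def LocSqInt (f : SL2 → ℂ) : Prop :=
  ∀ K : Set (ℝ × ℝ × ℝ), IsCompact K → K ⊆ {q | 0 < q.2.2} →
    IntegrableOn (fun q : ℝ × ℝ × ℝ => ‖f (kRot q.1 * nMat q.2.1 * dMat q.2.2)‖ ^ 2) K volume

/-- The squared norm `‖f‖²_{T₁,a₁⁻,ε}`:
`∫₀^{2π} ∫₀^{a₁} ∫_{I(T₁)} |f(k_θ n_T d_a)|² a^ε dT (da/a) dθ`, valued in `[0,∞]`,
where `I(T₁)` is the interval between `0` and `T₁`. -/
def normMinusSq (f : SL2 → ℂ) (T₁ a₁ ε : ℝ) : ℝ≥0∞ :=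
  ∫⁻ θ in Ioc (0:ℝ) (2 * π), ∫⁻ a in Ioc (0:ℝ) a₁,
    (∫⁻ T in uIcc (0:ℝ) T₁,
      (‖f (kRot θ * nMat T * dMat a)‖₊ : ℝ≥0∞) ^ 2 * ENNReal.ofReal (a ^ ε))
      * ENNReal.ofReal a⁻¹

/-!
Since `n_T d_a = d_a n_{T/a²}`, the function `T ↦ |f(k_θ n_T d_a)|²` is periodic with period
`p a²`, and the substitution `T = a² t` turns its integral over one period into
`a² ∫₀^p |f(k_θ d_a n_t)|² dt`. An interval of length `|T₁|` contains `⌊|T₁|/(p a²)⌋` disjoint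
periods and is covered by one more, which gives both bounds pointwise in `(θ, a)`.
-/

open Function

theorem setLIntegral_uIcc_eq_Ioc (g : ℝ → ℝ≥0∞) (a b : ℝ) :
    ∫⁻ t in uIcc a b, g t = ∫⁻ t in Ioc (min a b) (min a b + |b - a|), g t := by
  rw [uIcc, ← setLIntegral_congr Ioc_ae_eq_Icc, abs_sub_comm, ← max_sub_min_eq_abs',
    add_sub_cancel]

theorem setLIntegral_Ioc_comp_div {c : ℝ} (hc : 0 < c) (g : ℝ → ℝ≥0∞) (a b : ℝ) :
    ∫⁻ t in Ioc a b, g (t / c) = ENNReal.ofReal c * ∫⁻ t in Ioc (a / c) (b / c), g t := by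
  have hφ : MeasurableEmbedding (c * ·) := measurableEmbedding_mulLeft₀ hc.ne'
  have key : ∫⁻ t in Ioc a b, g (t / c) ∂(Measure.map (c * ·) volume)
      = ∫⁻ t in Ioc (a / c) (b / c), g t := by
    rw [hφ.restrict_map, hφ.lintegral_map, preimage_const_mul_Ioc₀ a b hc]
    simp only [mul_div_cancel_left₀ _ hc.ne']
  simp only [Real.map_volume_mul_left hc.ne', Measure.restrict_smul, lintegral_smul_measure,
    abs_inv, abs_of_pos hc, smul_eq_mul] at key
  rw [← key, ← mul_assoc, ← ENNReal.ofReal_mul hc.le, mul_inv_cancel₀ hc.ne', ENNReal.ofReal_one,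
    one_mul]

namespace Function.Periodic

variable {g : ℝ → ℝ≥0∞} {P : ℝ}

theorem setLIntegral_Ioc_add_eq (hg : Periodic g P) (hP : 0 < P) (c : ℝ) :
    ∫⁻ t in Ioc c (c + P), g t = ∫⁻ t in Ioc 0 P, g t := by
  have := Fact.mk hP
  have key := fun c => AddCircle.lintegral_preimage P c hg.lift
  simp only [Periodic.lift_coe] at key
  rw [key c, ← key 0, zero_add]

theorem setLIntegral_Ioc_add_nat_mul (hg : Periodic g P) (hP : 0 < P) (c : ℝ) (n : ℕ) :
    ∫⁻ t in Ioc c (c + n * P), g t = n * ∫⁻ t in Ioc 0 P, g t := by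
  induction n with
  | zero => simp
  | succ n ih =>
    rw [show c + ((n + 1 : ℕ) : ℝ) * P = c + n * P + P by push_cast; ring,
      ← Ioc_union_Ioc_eq_Ioc (b := c + n * P) (le_add_of_nonneg_right (by positivity))
        (by linarith),
      lintegral_union measurableSet_Ioc (Ioc_disjoint_Ioc_of_le le_rfl), ih,
      hg.setLIntegral_Ioc_add_eq hP]
    push_cast
    ring

theorem natFloor_mul_le_setLIntegral_Ioc (hg : Periodic g P) (hP : 0 < P) (c : ℝ) {L : ℝ}
    (hL : 0 ≤ L) :
    ⌊L / P⌋₊ * ∫⁻ t in Ioc 0 P, g t ≤ ∫⁻ t in Ioc c (c + L), g t := by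
  rw [← hg.setLIntegral_Ioc_add_nat_mul hP]
  refine lintegral_mono_set (Ioc_subset_Ioc_right ?_)
  have := Nat.floor_le (div_nonneg hL hP.le)
  rw [le_div_iff₀ hP] at this
  linarith

theorem setLIntegral_Ioc_le_natFloor_add_one_mul (hg : Periodic g P) (hP : 0 < P) (c L : ℝ) :
    ∫⁻ t in Ioc c (c + L), g t ≤ (⌊L / P⌋₊ + 1) * ∫⁻ t in Ioc 0 P, g t := by
  rw [← Nat.cast_add_one, ← hg.setLIntegral_Ioc_add_nat_mul hP]
  refine lintegral_mono_set (Ioc_subset_Ioc_right ?_)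
  have := Nat.lt_floor_add_one (L / P)
  rw [div_lt_iff₀ hP] at this
  push_cast
  linarith

theorem natFloor_mul_le_setLIntegral_uIcc (hg : Periodic g P) (hP : 0 < P) (a b : ℝ) :
    ⌊|b - a| / P⌋₊ * ∫⁻ t in Ioc 0 P, g t ≤ ∫⁻ t in uIcc a b, g t := by
  rw [setLIntegral_uIcc_eq_Ioc]
  exact hg.natFloor_mul_le_setLIntegral_Ioc hP _ (abs_nonneg _)

theorem setLIntegral_uIcc_le_natFloor_add_one_mul (hg : Periodic g P) (hP : 0 < P) (a b : ℝ) :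
    ∫⁻ t in uIcc a b, g t ≤ (⌊|b - a| / P⌋₊ + 1) * ∫⁻ t in Ioc 0 P, g t := by
  rw [setLIntegral_uIcc_eq_Ioc]
  exact hg.setLIntegral_Ioc_le_natFloor_add_one_mul hP _ _

end Function.Periodic

section SL2

lemma nMat_add (s t : ℝ) : nMat (s + t) = nMat s * nMat t := by
  ext i j
  rw [Matrix.SpecialLinearGroup.coe_mul]
  fin_cases i <;> fin_cases j <;> simp [nMat, Matrix.mul_apply, Fin.sum_univ_two, add_comm]

lemma nMat_mul_dMat {a : ℝ} (ha : a ≠ 0) (T : ℝ) :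
    nMat T * dMat a = dMat a * nMat (T / a ^ 2) := by
  ext i j
  rw [Matrix.SpecialLinearGroup.coe_mul, Matrix.SpecialLinearGroup.coe_mul]
  fin_cases i <;> fin_cases j <;> simp [nMat, dMat, ha, Matrix.mul_apply, Fin.sum_univ_two]
  field_simp

variable {β : Type*} {f : SL2 → β} {P : ℝ}

lemma periodic_mul_nMat (hper : ∀ x, f (x * nMat P) = f x) (x : SL2) :
    Periodic (fun t => f (x * nMat t)) P := fun t => by
  simp only [nMat_add, ← mul_assoc, hper]

lemma comp_mul_nMat_mul_dMat {a : ℝ} (ha : a ≠ 0) (x : SL2) :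
    (fun T => f (x * nMat T * dMat a)) = fun T => f (x * dMat a * nMat (T / a ^ 2)) := by
  simp only [mul_assoc, nMat_mul_dMat ha]

lemma periodic_mul_nMat_mul_dMat (hper : ∀ x, f (x * nMat P) = f x) (x : SL2) {a : ℝ}
    (ha : a ≠ 0) : Periodic (fun T => f (x * nMat T * dMat a)) (P * a ^ 2) := by
  rw [comp_mul_nMat_mul_dMat ha]
  exact (periodic_mul_nMat hper (x * dMat a)).div_const (a ^ 2)

lemma setLIntegral_Ioc_mul_nMat_mul_dMat (g : SL2 → ℝ≥0∞) (x : SL2) {a : ℝ} (ha : 0 < a) :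
    ∫⁻ T in Ioc 0 (P * a ^ 2), g (x * nMat T * dMat a)
      = ENNReal.ofReal (a ^ 2) * ∫⁻ t in Ioc 0 P, g (x * dMat a * nMat t) := by
  rw [comp_mul_nMat_mul_dMat ha.ne']
  have h := setLIntegral_Ioc_comp_div (pow_pos ha 2) (fun t => g (x * dMat a * nMat t)) 0
    (P * a ^ 2)
  rwa [zero_div, mul_div_cancel_right₀ _ (pow_ne_zero 2 ha.ne')] at h

end SL2

lemma ofReal_rpow_two_add_mul {a : ℝ} (ha : 0 < a) (ε : ℝ) {c : ℝ} (hc : 0 ≤ c) :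
    ENNReal.ofReal (a ^ ((2:ℝ) + ε) * c)
      = ENNReal.ofReal c * ENNReal.ofReal (a ^ 2) * ENNReal.ofReal (a ^ ε) := by
  rw [Real.rpow_add ha, Real.rpow_two, ← ENNReal.ofReal_mul (by positivity),
    ← ENNReal.ofReal_mul (by positivity)]
  ring_nf

section Siegel

variable {f : SL2 → ℂ} {P : ℝ}

theorem ofReal_floor_mul_setLIntegral_le (hP : 0 < P) (hper : ∀ x, f (x * nMat P) = f x)
    (x : SL2) {a : ℝ} (ha : 0 < a) (T₁ ε : ℝ) :
    ENNReal.ofReal (a ^ ((2:ℝ) + ε) * ((⌊|T₁| / (P * a ^ 2)⌋ : ℤ) : ℝ))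
        * ∫⁻ t in Ioc 0 P, (‖f (x * dMat a * nMat t)‖₊ : ℝ≥0∞) ^ 2
      ≤ ∫⁻ T in uIcc 0 T₁, (‖f (x * nMat T * dMat a)‖₊ : ℝ≥0∞) ^ 2 * ENNReal.ofReal (a ^ ε) := by
  have hG : Periodic (fun T => (‖f (x * nMat T * dMat a)‖₊ : ℝ≥0∞) ^ 2) (P * a ^ 2) :=
    (periodic_mul_nMat_mul_dMat hper x ha.ne').comp fun z => (‖z‖₊ : ℝ≥0∞) ^ 2
  have := hG.natFloor_mul_le_setLIntegral_uIcc (by positivity) 0 T₁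
  rw [sub_zero, setLIntegral_Ioc_mul_nMat_mul_dMat (fun y => (‖f y‖₊ : ℝ≥0∞) ^ 2) x ha] at this
  rw [lintegral_mul_const' _ _ ENNReal.ofReal_ne_top,
    ← natCast_floor_eq_intCast_floor (by positivity),
    ofReal_rpow_two_add_mul ha ε (by positivity), ENNReal.ofReal_natCast, mul_right_comm]
  gcongr ?_ * _
  rwa [mul_assoc]

theorem setLIntegral_le_ofReal_floor_add_one_mul (hP : 0 < P)
    (hper : ∀ x, f (x * nMat P) = f x) (x : SL2) {a : ℝ} (ha : 0 < a) (T₁ ε : ℝ) :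
    ∫⁻ T in uIcc 0 T₁, (‖f (x * nMat T * dMat a)‖₊ : ℝ≥0∞) ^ 2 * ENNReal.ofReal (a ^ ε)
      ≤ ENNReal.ofReal (a ^ ((2:ℝ) + ε) * (((⌊|T₁| / (P * a ^ 2)⌋ : ℤ) : ℝ) + 1))
        * ∫⁻ t in Ioc 0 P, (‖f (x * dMat a * nMat t)‖₊ : ℝ≥0∞) ^ 2 := by
  have hG : Periodic (fun T => (‖f (x * nMat T * dMat a)‖₊ : ℝ≥0∞) ^ 2) (P * a ^ 2) :=
    (periodic_mul_nMat_mul_dMat hper x ha.ne').comp fun z => (‖z‖₊ : ℝ≥0∞) ^ 2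
  have := hG.setLIntegral_uIcc_le_natFloor_add_one_mul (by positivity) 0 T₁
  rw [sub_zero, setLIntegral_Ioc_mul_nMat_mul_dMat (fun y => (‖f y‖₊ : ℝ≥0∞) ^ 2) x ha] at this
  rw [lintegral_mul_const' _ _ ENNReal.ofReal_ne_top,
    ← natCast_floor_eq_intCast_floor (by positivity),
    ofReal_rpow_two_add_mul ha ε (by positivity), ENNReal.ofReal_add (by positivity) zero_le_one,
    ENNReal.ofReal_natCast, ENNReal.ofReal_one, mul_right_comm]
  gcongr ?_ * _
  rwa [mul_assoc]

end Siegel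

theorem stmt1_general (p : ℕ) (hp : 0 < p) (T₁ : ℝ) (a₁ : ℝ) (ε : ℝ)
    (f : SL2 → ℂ)
    (hper : ∀ x : SL2, f (x * nMat (p : ℝ)) = f x) :
    (∫⁻ θ in Ioc (0:ℝ) (2 * π), ∫⁻ a in Ioc (0:ℝ) a₁,
        ENNReal.ofReal (a ^ ((2:ℝ) + ε) * ((⌊|T₁| / ((p : ℝ) * a ^ 2)⌋ : ℤ) : ℝ)) *
          (∫⁻ t in Ioc (0:ℝ) (p : ℝ), (‖f (kRot θ * dMat a * nMat t)‖₊ : ℝ≥0∞) ^ 2) *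
          ENNReal.ofReal a⁻¹)
      ≤ normMinusSq f T₁ a₁ ε ∧
    normMinusSq f T₁ a₁ ε
      ≤ (∫⁻ θ in Ioc (0:ℝ) (2 * π), ∫⁻ a in Ioc (0:ℝ) a₁,
          ENNReal.ofReal (a ^ ((2:ℝ) + ε) * (((⌊|T₁| / ((p : ℝ) * a ^ 2)⌋ : ℤ) : ℝ) + 1)) *
            (∫⁻ t in Ioc (0:ℝ) (p : ℝ), (‖f (kRot θ * dMat a * nMat t)‖₊ : ℝ≥0∞) ^ 2) *
            ENNReal.ofReal a⁻¹) := by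
  have hP : (0:ℝ) < p := Nat.cast_pos.2 hp
  constructor <;> refine lintegral_mono fun θ => lintegral_mono_ae <|
    ae_restrict_of_forall_mem measurableSet_Ioc fun a ha => mul_le_mul_left ?_ _
  · exact ofReal_floor_mul_setLIntegral_le hP hper (kRot θ) ha.1 T₁ ε
  · exact setLIntegral_le_ofReal_floor_add_one_mul hP hper (kRot θ) ha.1 T₁ ε

/-- for a measurable, locally square-integrable `f : SL(2,ℝ) → ℂ` that is
right `N_p`-periodic, the norm `‖f‖²_{T₁,a₁⁻,ε}` is squeezed between the two Siegel-type
integrals in the `KAN` coordinates, with floor coefficients `⌊|T₁|/(p a²)⌋` and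
`⌊|T₁|/(p a²)⌋ + 1`. -/
theorem stmt1 (p : ℕ) (hp : 0 < p) (T₁ : ℝ) (hT₁ : T₁ ≠ 0) (a₁ : ℝ) (ha₁ : 0 < a₁) (ε : ℝ)
    (f : SL2 → ℂ) (hf : Measurable f) (hloc : LocSqInt f)
    (hper : ∀ x : SL2, f (x * nMat (p : ℝ)) = f x) :
    (∫⁻ θ in Ioc (0:ℝ) (2 * π), ∫⁻ a in Ioc (0:ℝ) a₁,
        ENNReal.ofReal (a ^ ((2:ℝ) + ε) * ((⌊|T₁| / ((p : ℝ) * a ^ 2)⌋ : ℤ) : ℝ)) *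
          (∫⁻ t in Ioc (0:ℝ) (p : ℝ), (‖f (kRot θ * dMat a * nMat t)‖₊ : ℝ≥0∞) ^ 2) *
          ENNReal.ofReal a⁻¹)
      ≤ normMinusSq f T₁ a₁ ε ∧
    normMinusSq f T₁ a₁ ε
      ≤ (∫⁻ θ in Ioc (0:ℝ) (2 * π), ∫⁻ a in Ioc (0:ℝ) a₁,
          ENNReal.ofReal (a ^ ((2:ℝ) + ε) * (((⌊|T₁| / ((p : ℝ) * a ^ 2)⌋ : ℤ) : ℝ) + 1)) *
            (∫⁻ t in Ioc (0:ℝ) (p : ℝ), (‖f (kRot θ * dMat a * nMat t)‖₊ : ℝ≥0∞) ^ 2) *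
            ENNReal.ofReal a⁻¹) :=
  stmt1_general p hp T₁ a₁ ε f hper
end
end
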